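/- Appendix A entropy bound: For every power of 2 n and every k ∈ {1,2} (k̄ the other index), H( A[H^{(n)}_{V|Z}], T_{(k)}[H^{(n)}_{U_k|VZ}], T_{(k̄)}[H^{(n)}_{U_k̄|V U_k Z}] | Z^n ) ≥ (1 − δ_n) · ( |H^{(n)}_{V|Z}| + |H^{(n)}_{U_k|VZ}| + |H^{(n)}_{U_k̄|V U_k Z}| ). -/

import Mathlib

open scoped BigOperators

noncomputable section

namespace WTpaper

/-- A probability mass function on a finite type. -/
def IsPMF {Ω : Type*} [Fintype Ω] (μ : Ω → ℝ) : Prop :=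
  (∀ ω, 0 ≤ μ ω) ∧ ∑ ω, μ ω = 1

/-- `Finset.filter` over the whole type, with classical decidability. -/
def cfilter {α : Type*} [Fintype α] (p : α → Prop) : Finset α :=
  @Finset.filter α p (Classical.decPred p) Finset.univ

/-- Probability of an event. -/
def prob {Ω : Type*} [Fintype Ω] (μ : Ω → ℝ) (p : Ω → Prop) : ℝ :=
  ∑ ω ∈ cfilter p, μ ω

/-- Probability that a random variable takes a given value. -/
def probOf {Ω α : Type*} [Fintype Ω] (μ : Ω → ℝ) (X : Ω → α) (x : α) : ℝ :=
  prob μ (fun ω => X ω = x)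

/-- Shannon entropy (in bits) of a random variable on a finite probability space. -/
def ent {Ω α : Type*} [Fintype Ω] [Fintype α] (μ : Ω → ℝ) (X : Ω → α) : ℝ :=
  -∑ x : α, probOf μ X x * Real.logb 2 (probOf μ X x)

/-- Conditional Shannon entropy `H(X | Y)` (in bits). -/
def condEnt {Ω α β : Type*} [Fintype Ω] [Fintype α] [Fintype β]
    (μ : Ω → ℝ) (X : Ω → α) (Y : Ω → β) : ℝ :=
  ent μ (fun ω => (X ω, Y ω)) - ent μ Y

/-- Mutual information `I(X ; Y)` (in bits). -/
def mutInfo {Ω α β : Type*} [Fintype Ω] [Fintype α] [Fintype β]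
    (μ : Ω → ℝ) (X : Ω → α) (Y : Ω → β) : ℝ :=
  ent μ X + ent μ Y - ent μ (fun ω => (X ω, Y ω))

/-- Conditional mutual information `I(X ; Y | Z)` (in bits). -/
def condMutInfo {Ω α β γ : Type*} [Fintype Ω] [Fintype α] [Fintype β] [Fintype γ]
    (μ : Ω → ℝ) (X : Ω → α) (Y : Ω → β) (Z : Ω → γ) : ℝ :=
  condEnt μ X Z - condEnt μ X (fun ω => (Y ω, Z ω))

/-- The Markov chain `A − B − C`: `P(A,B,C) P(B) = P(A,B) P(B,C)`. -/
def MarkovChain {Ω α β γ : Type*} [Fintype Ω] (μ : Ω → ℝ)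
    (A : Ω → α) (B : Ω → β) (C : Ω → γ) : Prop :=
  ∀ a b c,
    probOf μ (fun ω => (A ω, B ω, C ω)) (a, b, c) * probOf μ B b =
      probOf μ (fun ω => (A ω, B ω)) (a, b) * probOf μ (fun ω => (B ω, C ω)) (b, c)

/-- `δ_n = 2^{-n^β}`. -/
def deltaN (β : ℝ) (n : ℕ) : ℝ := (2 : ℝ) ^ (-((n : ℝ) ^ β))

/-- Arıkan's polarization kernel. -/
def g2 : Matrix (Fin 2) (Fin 2) (ZMod 2) := !![1, 1; 1, 0]

def twoPowEquiv (m : ℕ) : Fin 2 × Fin (2 ^ m) ≃ Fin (2 ^ (m + 1)) :=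
  finProdFinEquiv.trans (finCongr (by rw [pow_succ]; exact Nat.mul_comm 2 (2 ^ m)))

/-- The source polarization matrix `G_n = [[1,1],[1,0]]^{⊗ m}`, with `n = 2^m`. -/
def polarG : (m : ℕ) → Matrix (Fin (2 ^ m)) (Fin (2 ^ m)) (ZMod 2)
  | 0 => 1
  | m + 1 =>
      Matrix.reindex (twoPowEquiv m) (twoPowEquiv m)
        (Matrix.kroneckerMap (· * ·) g2 (polarG m))

/-- The distribution of `n` i.i.d. copies of a source. -/
def iid {Ω : Type*} [Fintype Ω] (μ : Ω → ℝ) (n : ℕ) : (Fin n → Ω) → ℝ :=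
  fun ω => ∏ i, μ (ω i)

/-- The polar transform `U^n = X^n G_n` of the `n` i.i.d. copies of `X`. -/
def polarVec {Ω : Type*} (X : Ω → ZMod 2) (m : ℕ) (ω : Fin (2 ^ m) → Ω) :
    Fin (2 ^ m) → ZMod 2 :=
  Matrix.vecMul (fun i => X (ω i)) (polarG m)

/-- The prefix `U^{1:j-1}` of the polar transform. -/
def prefixVec {Ω : Type*} (X : Ω → ZMod 2) (m : ℕ) (j : Fin (2 ^ m))
    (ω : Fin (2 ^ m) → Ω) : Fin j.1 → ZMod 2 :=
  fun i => polarVec X m ω (Fin.castLE j.2.le i)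

/-- `H^{(n)}_{X|S} = { j : H(U(j) | U^{1:j-1}, S^n) ≥ 1 - δ_n }`, where `n = 2^m`. -/
def highSet {Ω σ : Type*} [Fintype Ω] [Fintype σ] (μ : Ω → ℝ) (X : Ω → ZMod 2)
    (S : Ω → σ) (β : ℝ) (m : ℕ) : Finset (Fin (2 ^ m)) :=
  cfilter fun j =>
    1 - deltaN β (2 ^ m) ≤
      condEnt (iid μ (2 ^ m)) (fun ω => polarVec X m ω j)
        (fun ω => (prefixVec X m j ω, fun i => S (ω i)))

/-- `L^{(n)}_{X|S} = { j : H(U(j) | U^{1:j-1}, S^n) ≤ δ_n }`, where `n = 2^m`. -/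
def lowSet {Ω σ : Type*} [Fintype Ω] [Fintype σ] (μ : Ω → ℝ) (X : Ω → ZMod 2)
    (S : Ω → σ) (β : ℝ) (m : ℕ) : Finset (Fin (2 ^ m)) :=
  cfilter fun j =>
    condEnt (iid μ (2 ^ m)) (fun ω => polarVec X m ω j)
        (fun ω => (prefixVec X m j ω, fun i => S (ω i))) ≤
      deltaN β (2 ^ m)

/-- `H^{(n)}_{X} = { j : H(U(j) | U^{1:j-1}) ≥ 1 - δ_n }` (no side information). -/
def highSet0 {Ω : Type*} [Fintype Ω] (μ : Ω → ℝ) (X : Ω → ZMod 2)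
    (β : ℝ) (m : ℕ) : Finset (Fin (2 ^ m)) :=
  cfilter fun j =>
    1 - deltaN β (2 ^ m) ≤
      condEnt (iid μ (2 ^ m)) (fun ω => polarVec X m ω j) (prefixVec X m j)

/-- `L^{(n)}_{X} = { j : H(U(j) | U^{1:j-1}) ≤ δ_n }` (no side information). -/
def lowSet0 {Ω : Type*} [Fintype Ω] (μ : Ω → ℝ) (X : Ω → ZMod 2)
    (β : ℝ) (m : ℕ) : Finset (Fin (2 ^ m)) :=
  cfilter fun j =>
    condEnt (iid μ (2 ^ m)) (fun ω => polarVec X m ω j) (prefixVec X m j) ≤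
      deltaN β (2 ^ m)

/-- The subvector `X[𝒜]`. -/
def restr {n : ℕ} {γ : Type*} (A : Finset (Fin n)) (v : Fin n → γ) :
    {j // j ∈ A} → γ :=
  fun j => v j.1

/-- The triple of secured subvectors
`(A[H^{(n)}_{V|Z}], T_{(k)}[H^{(n)}_{U_k|VZ}], T_{(k̄)}[H^{(n)}_{U_k̄|V U_k Z}])`
extracted from given realizations of the three polar-transformed layers.
`Ua` plays the role of `U_k` and `Ub` that of `U_k̄`. -/
def secTriple {Ω 𝒵 : Type*} [Fintype Ω] [Fintype 𝒵]
    (μ : Ω → ℝ) (V Ua Ub : Ω → ZMod 2) (Z : Ω → 𝒵) (β : ℝ) (m : ℕ)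
    (a ta tb : Fin (2 ^ m) → ZMod 2) :=
  (restr (highSet μ V Z β m) a,
   restr (highSet μ Ua (fun ω => (V ω, Z ω)) β m) ta,
   restr (highSet μ Ub (fun ω => (V ω, Ua ω, Z ω)) β m) tb)

/-! Each secured block is a subvector `U[H]` of a polar transform, and by the chain rule its
conditional entropy is at least `∑_{j ∈ H} H(U(j) | U[H ∩ [1:j-1]], side information)`.
Conditioning on less only increases entropy, and the side information of each block (the earlier
blocks together with `Z^n`) is a function of the side information `S^n` in the definition of its
index set, so every summand is at least `H(U(j) | U^{1:j-1}, S^n) ≥ 1 - δ_n`. The chain rule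
then adds up the three blocks. -/

open Real

section Entropy

variable {Ω α β γ : Type*} [Fintype Ω] {μ : Ω → ℝ}

lemma probOf_eq_sum_ite [DecidableEq α] (W : Ω → α) (a : α) :
    probOf μ W a = ∑ ω, if W ω = a then μ ω else 0 := by
  unfold probOf prob cfilter
  rw [Finset.sum_filter]
  exact Finset.sum_congr rfl fun ω _ => by congr

lemma sum_probOf_mul [Fintype α] (W : Ω → α) (g : α → ℝ) :
    ∑ a, probOf μ W a * g a = ∑ ω, μ ω * g (W ω) := by
  classical
  simp_rw [probOf_eq_sum_ite, Finset.sum_mul, ite_mul, zero_mul]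
  rw [Finset.sum_comm]
  simp

lemma sum_probOf [Fintype α] (W : Ω → α) : ∑ a, probOf μ W a = ∑ ω, μ ω := by
  simpa using sum_probOf_mul (μ := μ) W 1

lemma sum_probOf_pair [Fintype α] (A : Ω → α) (B : Ω → β) (b : β) :
    ∑ a, probOf μ (fun ω => (A ω, B ω)) (a, b) = probOf μ B b := by
  classical
  simp_rw [probOf_eq_sum_ite, Prod.mk.injEq, ite_and]
  rw [Finset.sum_comm]
  simp

lemma probOf_nonneg (hμ : ∀ ω, 0 ≤ μ ω) (W : Ω → α) (a : α) : 0 ≤ probOf μ W a :=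
  Finset.sum_nonneg fun ω _ => hμ ω

lemma le_probOf_apply (hμ : ∀ ω, 0 ≤ μ ω) (W : Ω → α) (ω : Ω) : μ ω ≤ probOf μ W (W ω) := by
  classical
  rw [probOf_eq_sum_ite]
  simpa using Finset.single_le_sum (f := fun ω' => if W ω' = W ω then μ ω' else 0)
    (fun ω' _ => by split_ifs <;> simp [hμ ω']) (Finset.mem_univ ω)

lemma probOf_le_probOf_comp (hμ : ∀ ω, 0 ≤ μ ω) (W : Ω → α) (f : α → β) (a : α) :
    probOf μ W a ≤ probOf μ (fun ω => f (W ω)) (f a) := by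
  classical
  simp_rw [probOf_eq_sum_ite]
  refine Finset.sum_le_sum fun ω _ => ?_
  split_ifs with h h' <;> simp_all

lemma probOf_comp_of_injective {f : α → β} (hf : Function.Injective f) (W : Ω → α) (a : α) :
    probOf μ (fun ω => f (W ω)) (f a) = probOf μ W a := by
  classical
  simp_rw [probOf_eq_sum_ite, hf.eq_iff]

lemma ent_mul_log_two [Fintype α] (W : Ω → α) :
    ent μ W * log 2 = -∑ ω, μ ω * log (probOf μ W (W ω)) := by
  have hlog : log 2 ≠ 0 := by positivity
  rw [ent, neg_mul, Finset.sum_mul, ← sum_probOf_mul W fun a => log (probOf μ W a)]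
  simp_rw [mul_assoc, logb, div_mul_cancel₀ _ hlog]

lemma ent_comp_of_injective [Fintype α] [Fintype β] {f : α → β} (hf : Function.Injective f)
    (W : Ω → α) : ent μ (fun ω => f (W ω)) = ent μ W := by
  refine mul_right_cancel₀ (show log 2 ≠ 0 by positivity) ?_
  simp_rw [ent_mul_log_two, probOf_comp_of_injective hf]

lemma condEnt_comp_left_of_injective [Fintype α] [Fintype β] [Fintype γ] {f : α → β}
    (hf : Function.Injective f) (X : Ω → α) (S : Ω → γ) :
    condEnt μ (fun ω => f (X ω)) S = condEnt μ X S := by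
  rw [condEnt, condEnt, ← ent_comp_of_injective (hf.prodMap Function.injective_id)]
  rfl

lemma condEnt_comp_right_of_injective [Fintype α] [Fintype β] [Fintype γ] {g : β → γ}
    (hg : Function.Injective g) (X : Ω → α) (S : Ω → β) :
    condEnt μ X (fun ω => g (S ω)) = condEnt μ X S := by
  rw [condEnt, condEnt, ← ent_comp_of_injective (Function.injective_id.prodMap hg),
    ent_comp_of_injective hg]
  rfl

lemma condEnt_nonneg [Fintype α] [Fintype β] (hμ : ∀ ω, 0 ≤ μ ω) (X : Ω → α) (S : Ω → β) :
    0 ≤ condEnt μ X S := by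
  rw [condEnt, sub_nonneg, ← mul_le_mul_iff_left₀ (show (0 : ℝ) < log 2 by positivity),
    ent_mul_log_two, ent_mul_log_two, neg_le_neg_iff]
  refine Finset.sum_le_sum fun ω _ => ?_
  rcases (hμ ω).eq_or_lt with h | h
  · simp [← h]
  · exact mul_le_mul_of_nonneg_left (log_le_log (h.trans_le (le_probOf_apply hμ _ ω))
      (probOf_le_probOf_comp hμ _ Prod.snd _)) h.le

lemma condEnt_prod_eq_add [Fintype α] [Fintype β] [Fintype γ]
    (P : Ω → α) (Q : Ω → β) (S : Ω → γ) :
    condEnt μ (fun ω => (P ω, Q ω)) S = condEnt μ P S + condEnt μ Q (fun ω => (P ω, S ω)) := by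
  have hf : Function.Injective fun t : β × α × γ => ((t.2.1, t.1), t.2.2) :=
    fun t t' h => by simp_all [Prod.ext_iff]
  have h := ent_comp_of_injective (μ := μ) hf fun ω => (Q ω, P ω, S ω)
  simp only [condEnt] at h ⊢
  rw [h]
  ring

lemma mul_log_div_le_sub {p r : ℝ} (hp : 0 ≤ p) (hr : 0 ≤ r) (hpr : 0 < p → 0 < r) :
    p * log (r / p) ≤ r - p := by
  rcases hp.eq_or_lt with rfl | hp
  · simpa using hr
  · calc p * log (r / p) ≤ p * (r / p - 1) :=
          mul_le_mul_of_nonneg_left (log_le_sub_one_of_pos (div_pos (hpr hp) hp)) hp.le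
      _ = r - p := by field_simp

lemma sum_probOf_mul_probOf_div_probOf [Fintype α] [Fintype β] [Fintype γ]
    (X : Ω → α) (Y : Ω → β) (S : Ω → γ) :
    ∑ t : α × β × γ, probOf μ (fun ω => (X ω, S ω)) (t.1, t.2.2) *
        probOf μ (fun ω => (Y ω, S ω)) t.2 / probOf μ S t.2.2 = ∑ ω, μ ω := by
  calc _ = ∑ s, (∑ x, probOf μ (fun ω => (X ω, S ω)) (x, s)) *
          (∑ y, probOf μ (fun ω => (Y ω, S ω)) (y, s)) / probOf μ S s := by
        simp_rw [Finset.sum_mul_sum, Finset.sum_div, Fintype.sum_prod_type]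
        conv_rhs => rw [Finset.sum_comm]
        exact Finset.sum_congr rfl fun x _ => Finset.sum_comm
    _ = ∑ ω, μ ω := by simp_rw [sum_probOf_pair, mul_self_div_self, sum_probOf]

/-- Gibbs' inequality against `p(x,s) p(y,s) / p(s)`, the law under which `X` and `Y` are
conditionally independent given `S`. -/
lemma condEnt_prod_le [Fintype α] [Fintype β] [Fintype γ] (hμ : ∀ ω, 0 ≤ μ ω)
    (X : Ω → α) (Y : Ω → β) (S : Ω → γ) :
    condEnt μ X (fun ω => (Y ω, S ω)) ≤ condEnt μ X S := by
  rw [← mul_le_mul_iff_left₀ (show (0 : ℝ) < log 2 by positivity), condEnt, condEnt, sub_mul,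
    sub_mul, ent_mul_log_two, ent_mul_log_two, ent_mul_log_two, ent_mul_log_two]
  set q := probOf μ fun ω => (X ω, Y ω, S ω)
  set pXS := probOf μ fun ω => (X ω, S ω)
  set pYS := probOf μ fun ω => (Y ω, S ω)
  set pS := probOf μ S
  have hq : ∀ t, q t ≤ pXS (t.1, t.2.2) ∧ q t ≤ pYS t.2 ∧ q t ≤ pS t.2.2 := fun t =>
    ⟨probOf_le_probOf_comp hμ _ (fun t => (t.1, t.2.2)) t, probOf_le_probOf_comp hμ _ Prod.snd t,
      probOf_le_probOf_comp hμ _ (fun t => t.2.2) t⟩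
  have hsplit : ∀ t, q t * log (pXS (t.1, t.2.2) * pYS t.2 / pS t.2.2 / q t) =
      q t * log (pXS (t.1, t.2.2)) + q t * log (pYS t.2) - q t * log (pS t.2.2) -
        q t * log (q t) := by
    intro t
    rcases (show 0 ≤ q t from probOf_nonneg hμ _ t).eq_or_lt with h | h
    · simp [← h]
    obtain ⟨h₁, h₂, h₃⟩ := hq t
    have hXS := h.trans_le h₁
    have hYS := h.trans_le h₂
    have hS := h.trans_le h₃
    rw [log_div (by positivity) h.ne', log_div (by positivity) hS.ne', log_mul hXS.ne' hYS.ne']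
    ring
  have hgibbs : ∑ t, q t * log (pXS (t.1, t.2.2) * pYS t.2 / pS t.2.2 / q t) ≤ 0 :=
    calc _ ≤ ∑ t, (pXS (t.1, t.2.2) * pYS t.2 / pS t.2.2 - q t) := by
          refine Finset.sum_le_sum fun t _ => mul_log_div_le_sub (probOf_nonneg hμ _ t)
            (div_nonneg (mul_nonneg (probOf_nonneg hμ _ _) (probOf_nonneg hμ _ _))
              (probOf_nonneg hμ _ _)) fun h => ?_
          obtain ⟨h₁, h₂, h₃⟩ := hq t
          exact div_pos (mul_pos (h.trans_le h₁) (h.trans_le h₂)) (h.trans_le h₃)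
      _ = 0 := by
          rw [Finset.sum_sub_distrib, sum_probOf_mul_probOf_div_probOf, sum_probOf, sub_self]
  simp_rw [hsplit, Finset.sum_sub_distrib, Finset.sum_add_distrib] at hgibbs
  have eXS : ∑ t, q t * log (pXS (t.1, t.2.2)) = ∑ ω, μ ω * log (pXS (X ω, S ω)) :=
    sum_probOf_mul (fun ω => (X ω, Y ω, S ω)) fun t => log (pXS (t.1, t.2.2))
  have eYS : ∑ t, q t * log (pYS t.2) = ∑ ω, μ ω * log (pYS (Y ω, S ω)) :=
    sum_probOf_mul (fun ω => (X ω, Y ω, S ω)) fun t => log (pYS t.2)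
  have eS : ∑ t, q t * log (pS t.2.2) = ∑ ω, μ ω * log (pS (S ω)) :=
    sum_probOf_mul (fun ω => (X ω, Y ω, S ω)) fun t => log (pS t.2.2)
  have eXYS : ∑ t, q t * log (q t) = ∑ ω, μ ω * log (q (X ω, Y ω, S ω)) :=
    sum_probOf_mul (fun ω => (X ω, Y ω, S ω)) fun t => log (q t)
  linarith

lemma condEnt_le_condEnt_comp {δ ε : Type*} [Fintype α] [Fintype δ] [Fintype ε]
    (hμ : ∀ ω, 0 ≤ μ ω) (X : Ω → α) (W : Ω → δ) (f : δ → ε) :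
    condEnt μ X W ≤ condEnt μ X (fun ω => f (W ω)) := by
  have hg : Function.Injective fun w : δ => (w, f w) := fun w w' h => congrArg Prod.fst h
  rw [← condEnt_comp_right_of_injective hg]
  exact condEnt_prod_le hμ X W fun ω => f (W ω)

end Entropy

section Restriction

variable {Ω α σ : Type*} [Fintype Ω] [Fintype α] [Fintype σ] {μ : Ω → ℝ} {n : ℕ}

lemma condEnt_restr_insert (v : Ω → Fin n → α) (S : Ω → σ) (a : Fin n) (s : Finset (Fin n)) :
    condEnt μ (fun ω => restr (insert a s) (v ω)) S =
      condEnt μ (fun ω => (restr s (v ω), v ω a)) S := by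
  have hf : Function.Injective fun w : {j // j ∈ insert a s} → α =>
      ((fun j : {j // j ∈ s} => w ⟨j, Finset.mem_insert_of_mem j.2⟩),
        w ⟨a, Finset.mem_insert_self a s⟩) := by
    intro w w' h
    simp only [Prod.mk.injEq] at h
    funext ⟨j, hj⟩
    rcases Finset.mem_insert.1 hj with rfl | hj
    · exact h.2
    · exact congrFun h.1 ⟨j, hj⟩
  exact (condEnt_comp_left_of_injective hf _ S).symm

lemma sum_condEnt_prefix_le_condEnt_restr (hμ : ∀ ω, 0 ≤ μ ω) (v : Ω → Fin n → α)
    (S : Ω → σ) (A : Finset (Fin n)) :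
    ∑ j ∈ A, condEnt μ (fun ω => v ω j)
        (fun ω => (fun i : Fin j => v ω (Fin.castLE j.2.le i), S ω)) ≤
      condEnt μ (fun ω => restr A (v ω)) S := by
  induction A using Finset.induction_on_max with
  | empty => simpa using condEnt_nonneg hμ (fun ω => restr ∅ (v ω)) S
  | insert a s ha ih =>
    rw [Finset.sum_insert fun h => lt_irrefl a (ha a h), condEnt_restr_insert,
      condEnt_prod_eq_add]
    have hprefix : condEnt μ (fun ω => v ω a)
          (fun ω => (fun i : Fin a => v ω (Fin.castLE a.2.le i), S ω)) ≤
        condEnt μ (fun ω => v ω a) (fun ω => (restr s (v ω), S ω)) :=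
      condEnt_le_condEnt_comp hμ _ (fun ω => (fun i : Fin a => v ω (Fin.castLE a.2.le i), S ω))
        fun p : (Fin a → α) × σ => (fun j : {j // j ∈ s} => p.1 ⟨j.1, ha j j.2⟩, p.2)
    linarith

end Restriction

lemma iid_nonneg {Ω : Type*} [Fintype Ω] {μ : Ω → ℝ} (hμ : ∀ ω, 0 ≤ μ ω) (n : ℕ)
    (ω : Fin n → Ω) : 0 ≤ iid μ n ω :=
  Finset.prod_nonneg fun i _ => hμ (ω i)

lemma card_highSet_mul_le_condEnt {Ω σ τ : Type*} [Fintype Ω] [Fintype σ] [Fintype τ]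
    {μ : Ω → ℝ} (hμ : ∀ ω, 0 ≤ μ ω) (X : Ω → ZMod 2) (S : Ω → σ) (β : ℝ) (m : ℕ)
    (f : (Fin (2 ^ m) → σ) → τ) :
    (1 - deltaN β (2 ^ m)) * (highSet μ X S β m).card ≤
      condEnt (iid μ (2 ^ m)) (fun ω => restr (highSet μ X S β m) (polarVec X m ω))
        (fun ω => f fun i => S (ω i)) :=
  calc (1 - deltaN β (2 ^ m)) * (highSet μ X S β m).card
      = ∑ _j ∈ highSet μ X S β m, (1 - deltaN β (2 ^ m)) := by
        rw [Finset.sum_const, nsmul_eq_mul, mul_comm]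
    _ ≤ ∑ j ∈ highSet μ X S β m, condEnt (iid μ (2 ^ m)) (fun ω => polarVec X m ω j)
          (fun ω => (prefixVec X m j ω, fun i => S (ω i))) :=
        Finset.sum_le_sum fun j hj => by
          simpa [highSet, cfilter] using hj
    _ ≤ ∑ j ∈ highSet μ X S β m, condEnt (iid μ (2 ^ m)) (fun ω => polarVec X m ω j)
          (fun ω => (prefixVec X m j ω, f fun i => S (ω i))) :=
        Finset.sum_le_sum fun j _ => condEnt_le_condEnt_comp (iid_nonneg hμ _) _ _
          fun p : (Fin j → ZMod 2) × (Fin (2 ^ m) → σ) => (p.1, f p.2)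
    _ ≤ _ := sum_condEnt_prefix_le_condEnt_restr (iid_nonneg hμ _) (polarVec X m) _ _

theorem appendixA_entropy_bound_general
    {Ω 𝒵 : Type*} [Fintype Ω] [Fintype 𝒵]
    (μ : Ω → ℝ) (hμ : IsPMF μ)
    (V Ua Ub : Ω → ZMod 2) (Z : Ω → 𝒵)
    (β : ℝ) (m : ℕ) :
    (1 - deltaN β (2 ^ m)) *
        (((highSet μ V Z β m).card : ℝ)
          + ((highSet μ Ua (fun ω => (V ω, Z ω)) β m).card : ℝ)
          + ((highSet μ Ub (fun ω => (V ω, Ua ω, Z ω)) β m).card : ℝ)) ≤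
      condEnt (iid μ (2 ^ m))
        (fun ω => secTriple μ V Ua Ub Z β m
          (polarVec V m ω) (polarVec Ua m ω) (polarVec Ub m ω))
        (fun ω => fun i => Z (ω i)) := by
  set H₁ := highSet μ V Z β m
  set H₂ := highSet μ Ua (fun ω => (V ω, Z ω)) β m
  have h₁ := card_highSet_mul_le_condEnt hμ.1 V Z β m id
  have h₂ := card_highSet_mul_le_condEnt hμ.1 Ua (fun ω => (V ω, Z ω)) β m
    fun s => (restr H₁ (Matrix.vecMul (fun i => (s i).1) (polarG m)), fun i => (s i).2)
  have h₃ := card_highSet_mul_le_condEnt hμ.1 Ub (fun ω => (V ω, Ua ω, Z ω)) β m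
    fun s => (restr H₂ (Matrix.vecMul (fun i => (s i).2.1) (polarG m)),
      restr H₁ (Matrix.vecMul (fun i => (s i).1) (polarG m)), fun i => (s i).2.2)
  unfold secTriple
  rw [condEnt_prod_eq_add, condEnt_prod_eq_add, mul_add, mul_add, ← add_assoc]
  exact add_le_add (add_le_add h₁ h₂) h₃

/-- **Appendix A entropy bound.**
`H(A[H_{V|Z}], T_{(k)}[H_{U_k|VZ}], T_{(k̄)}[H_{U_k̄|V U_k Z}] | Z^n) ≥
(1 − δ_n)(|H_{V|Z}| + |H_{U_k|VZ}| + |H_{U_k̄|V U_k Z}|)` under the i.i.d. source law. -/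
theorem appendixA_entropy_bound
    {Ω 𝒵 : Type*} [Fintype Ω] [Fintype 𝒵]
    (μ : Ω → ℝ) (hμ : IsPMF μ)
    (V Ua Ub : Ω → ZMod 2) (Z : Ω → 𝒵)
    (β : ℝ) (hβ0 : 0 < β) (hβ1 : β < 1 / 2) (m : ℕ) :
    (1 - deltaN β (2 ^ m)) *
        (((highSet μ V Z β m).card : ℝ)
          + ((highSet μ Ua (fun ω => (V ω, Z ω)) β m).card : ℝ)
          + ((highSet μ Ub (fun ω => (V ω, Ua ω, Z ω)) β m).card : ℝ)) ≤
      condEnt (iid μ (2 ^ m))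
        (fun ω => secTriple μ V Ua Ub Z β m
          (polarVec V m ω) (polarVec Ua m ω) (polarVec Ub m ω))
        (fun ω => fun i => Z (ω i)) :=
  appendixA_entropy_bound_general μ hμ V Ua Ub Z β m

end WTpaper
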